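/- If A ⊂ Z^q represents all types, then either A contains a basis of the real vector space R^q (i.e., a linearly independent subset of size q over R, viewing integer vectors as real vectors), or there exists a subset A_1 ⊂ A with c(A_1) < q such that A_1 represents all types, where c(A_1) is the number of coordinates i for which some vector in A_1 has nonzero i-th entry. -/

import Mathlib

/-- A `q`-type is a tuple of signs `±1`. -/
def IsType {q : ℕ} (τ : Fin q → ℤ) : Prop := ∀ i, τ i = 1 ∨ τ i = -1

/-- `a ∈ ℤ^q` represents the `q`-type `τ`: for some `η = ±1`, `sign (a i) = η * τ i`
whenever `a i ≠ 0`, and `∑ |a i| ≥ 2`. -/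
def Represents {q : ℕ} (a τ : Fin q → ℤ) : Prop :=
  (∃ η : ℤ, (η = 1 ∨ η = -1) ∧ ∀ i, a i ≠ 0 → Int.sign (a i) = η * τ i) ∧
  2 ≤ ∑ i, |a i|

/-- A set `A ⊆ ℤ^q` represents all `q`-types. -/
def RepresentsAll {q : ℕ} (A : Set (Fin q → ℤ)) : Prop :=
  ∀ τ : Fin q → ℤ, IsType τ → ∃ a ∈ A, Represents a τ

/-- The support of a set of vectors: coordinates where some vector is nonzero. -/
def supp {q : ℕ} (A : Set (Fin q → ℤ)) : Set (Fin q) := {i | ∃ a ∈ A, a i ≠ 0}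

/-! If the integer vectors of `A` span `ℝ^q`, a basis can be extracted from them. Otherwise some
nonzero `w` is orthogonal to all of `A`. Given a type `τ`, replace its signs on the support of `w`
by the signs of `w`; a vector `a ∈ A` representing the new type satisfies
`0 = w ⬝ᵥ a = ±∑ |w i| |a i|`, so it vanishes on the support of `w`, and it still represents `τ`.
Hence the vectors of `A` vanishing on the support of `w` represent all types. -/

open Module Submodule

theorem exists_linearIndependent_comp_of_span_image_eq_top {K M α : Type*} [DivisionRing K]
    [AddCommGroup M] [Module K M] [FiniteDimensional K M] {n : ℕ} (hn : finrank K M = n)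
    {φ : α → M} {A : Set α} (hA : span K (φ '' A) = ⊤) :
    ∃ b : Fin n → α, (∀ i, b i ∈ A) ∧ LinearIndependent K (φ ∘ b) := by
  obtain ⟨f, hfA, -, hf⟩ := exists_fun_fin_finrank_span_eq K (φ '' A)
  have e : finrank K (span K (φ '' A)) = n := by rw [hA, finrank_top, hn]
  choose b hbA hφb using fun i => hfA (Fin.cast e.symm i)
  refine ⟨b, hbA, ?_⟩
  rw [show φ ∘ b = f ∘ Fin.cast e.symm from funext hφb]
  exact hf.comp _ (Fin.cast_injective _)

theorem exists_ne_zero_forall_dotProduct_eq_zero {ι K : Type*} [Fintype ι] [Field K]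
    {s : Set (ι → K)} (hs : span K s ≠ ⊤) : ∃ w ≠ 0, ∀ v ∈ s, w ⬝ᵥ v = 0 := by
  classical
  obtain ⟨f, hf0, hf⟩ := exists_dual_map_eq_bot_of_lt_top hs.lt_top inferInstance
  refine ⟨(dotProductEquiv K ι).symm f, by simpa using hf0, fun v hv => ?_⟩
  have hfv := mem_map_of_mem (f := f) (subset_span hv)
  rw [hf, mem_bot] at hfv
  rwa [← dotProductEquiv_apply_apply, LinearEquiv.apply_symm_apply]

theorem Represents.of_eq_on_support {q : ℕ} {a σ τ : Fin q → ℤ} (ha : Represents a σ)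
    (h : ∀ i, a i ≠ 0 → σ i = τ i) : Represents a τ := by
  obtain ⟨⟨η, hη, hsign⟩, hsum⟩ := ha
  exact ⟨⟨η, hη, fun i hi => h i hi ▸ hsign i hi⟩, hsum⟩

section Signs

variable {K : Type*} [Field K] [LinearOrder K] {q : ℕ}

def alignType (w : Fin q → K) (τ : Fin q → ℤ) : Fin q → ℤ :=
  fun i => if w i = 0 then τ i else if 0 < w i then 1 else -1

theorem IsType.alignType {τ : Fin q → ℤ} (hτ : IsType τ) (w : Fin q → K) :
    IsType (alignType w τ) := by
  intro i
  unfold _root_.alignType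
  split_ifs <;> simp [hτ i]

variable [IsStrictOrderedRing K]

theorem alignType_mul_eq_abs (w : Fin q → K) (τ : Fin q → ℤ) (i : Fin q) :
    (alignType w τ i : K) * w i = |w i| := by
  unfold alignType
  split_ifs with h0 hpos
  · simp [h0]
  · simp [abs_of_pos hpos]
  · simp [abs_of_neg (lt_of_le_of_ne (not_lt.mp hpos) h0)]

theorem Represents.eq_zero_of_dotProduct_eq_zero {a τ : Fin q → ℤ} {w : Fin q → K}
    (ha : Represents a τ) (hτw : ∀ i, (τ i : K) * w i = |w i|)
    (h : w ⬝ᵥ (fun j => (a j : K)) = 0) {i : Fin q} (hi : w i ≠ 0) : a i = 0 := by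
  obtain ⟨⟨η, hη, hsign⟩, -⟩ := ha
  have ha_eq : ∀ j, (a j : K) = η * τ j * |(a j : K)| := by
    intro j
    by_cases h0 : a j = 0
    · simp [h0]
    · have := Int.sign_mul_abs (a j)
      rw [hsign j h0] at this
      exact_mod_cast this.symm
  have hterm : ∀ j, w j * a j = η * (|w j| * |(a j : K)|) := by
    intro j
    conv_lhs => rw [ha_eq j]
    rw [← hτw j]
    ring
  have hsum : (η : K) * ∑ j, |w j| * |(a j : K)| = 0 := by
    simpa only [dotProduct, hterm, ← Finset.mul_sum] using h
  have hη0 : (η : K) ≠ 0 := by rcases hη with rfl | rfl <;> norm_num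
  have hi0 := (Finset.sum_eq_zero_iff_of_nonneg fun j _ => by positivity).mp
    ((mul_eq_zero.mp hsum).resolve_left hη0) i (Finset.mem_univ i)
  simpa [hi] using hi0

theorem RepresentsAll.sep_forall_eq_zero {A : Set (Fin q → ℤ)} (hA : RepresentsAll A)
    {w : Fin q → K} (hw : ∀ a ∈ A, w ⬝ᵥ (fun j => (a j : K)) = 0) :
    RepresentsAll {a ∈ A | ∀ i, w i ≠ 0 → a i = 0} := by
  intro τ hτ
  obtain ⟨a, haA, ha⟩ := hA _ (hτ.alignType w)
  have hzero : ∀ i, w i ≠ 0 → a i = 0 := fun i =>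
    ha.eq_zero_of_dotProduct_eq_zero (alignType_mul_eq_abs w τ) (hw a haA)
  refine ⟨a, ⟨haA, hzero⟩, ha.of_eq_on_support fun i hai => ?_⟩
  simp [alignType, not_imp_comm.mp (hzero i) hai]

end Signs

theorem ncard_supp_lt_of_forall_apply_eq_zero {q : ℕ} {A : Set (Fin q → ℤ)} {i : Fin q}
    (h : ∀ a ∈ A, a i = 0) : (supp A).ncard < q := by
  have hsub : supp A ⊂ Set.univ := Set.ssubset_univ_iff.mpr fun hu => by
    obtain ⟨a, ha, hai⟩ := hu ▸ Set.mem_univ i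
    exact hai (h a ha)
  simpa using Set.ncard_lt_ncard hsub

/-- If `A ⊆ ℤ^q` represents all types, then either `A` contains a basis of `ℝ^q`
(q vectors linearly independent over `ℝ`), or some subset `A₁ ⊆ A` supported on fewer
than `q` coordinates represents all types. -/
theorem representsAll_basis_or_smaller_support {q : ℕ} (A : Set (Fin q → ℤ))
    (hA : RepresentsAll A) :
    (∃ b : Fin q → (Fin q → ℤ), (∀ i, b i ∈ A) ∧
      LinearIndependent ℝ (fun i => fun j => ((b i j : ℝ)))) ∨
    (∃ A₁ ⊆ A, (supp A₁).ncard < q ∧ RepresentsAll A₁) := by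
  by_cases hspan : span ℝ ((fun a j => (a j : ℝ)) '' A) = ⊤
  · exact .inl (exists_linearIndependent_comp_of_span_image_eq_top (finrank_fin_fun ℝ) hspan)
  · obtain ⟨w, hw0, hw⟩ := exists_ne_zero_forall_dotProduct_eq_zero hspan
    obtain ⟨i, hi⟩ := Function.ne_iff.mp hw0
    exact .inr ⟨{a ∈ A | ∀ i, w i ≠ 0 → a i = 0}, Set.sep_subset _ _,
      ncard_supp_lt_of_forall_apply_eq_zero fun a ha => ha.2 i hi,
      hA.sep_forall_eq_zero fun a ha => hw _ (Set.mem_image_of_mem _ ha)⟩
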